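/- Let G = ([N],[M],E) be a bipartite multigraph with left degree D that is a (K,ε)-extractor, and let S be a subset of the left part with |S| = K. Call a right vertex 'bad' if it has more than 2DK/M edges to S (counted with multiplicity), and call an element of S 'bad' if all of its D neighbors are bad right vertices. Then the number of bad elements of S is at most 2εK. -/

import Mathlib

open Finset

/-- The bipartite multigraph represented by `G : Fin N → Fin D → Fin M` (each left vertex
has exactly `D` edges) is a `(K, ε)`-extractor: for every `A ⊆ [N]` with `|A| ≥ K` and
every `B ⊆ [M]`, `| |E(A,B)|/(|A|·D) − |B|/M | < ε`, where `E(A,B)` is the multiset of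
edges from `A` to `B`. -/
def IsGraphExtractor {N M D : ℕ} (K : ℕ) (ε : ℝ) (G : Fin N → Fin D → Fin M) : Prop :=
  ∀ A : Finset (Fin N), K ≤ A.card → ∀ B : Finset (Fin M),
    |((∑ a ∈ A, (Finset.univ.filter (fun j => G a j ∈ B)).card : ℕ) : ℝ) /
        ((A.card : ℝ) * D) - (B.card : ℝ) / M| < ε

/-- A right vertex `z` is bad for `S` if more than `2DK/M` edges (with multiplicity) lead
from `S` to `z`. -/
def BadRight {N M D : ℕ} (K : ℕ) (G : Fin N → Fin D → Fin M) (S : Finset (Fin N))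
    (z : Fin M) : Prop :=
  (2 * D * K : ℝ) / M < ((∑ b ∈ S, (Finset.univ.filter (fun j => G b j = z)).card : ℕ) : ℝ)

/-- Let `G` be a bipartite multigraph with left degree `D` that is a `(K,ε)`-extractor and
`S` a left set with `|S| = K`. If an element of `S` is called bad when all of its `D`
neighbours are bad right vertices, then `S` has at most `2εK` bad elements. -/
theorem few_bad_elements (N M K D : ℕ) (hM : 0 < M) (ε : ℝ)
    (G : Fin N → Fin D → Fin M) (hG : IsGraphExtractor K ε G)
    (S : Finset (Fin N)) (hS : S.card = K) :
    ((Set.ncard {a : Fin N | a ∈ S ∧ ∀ j : Fin D, BadRight K G S (G a j)}) : ℝ)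
      ≤ 2 * ε * K := by
  classical
  set T : Finset (Fin N) := S.filter (fun a => ∀ j : Fin D, BadRight K G S (G a j)) with hT
  have hset : {a : Fin N | a ∈ S ∧ ∀ j : Fin D, BadRight K G S (G a j)} = ↑T := by
    ext a; simp [hT]
  rw [hset, Set.ncard_coe_finset]
  rcases Nat.eq_zero_or_pos K with hK | hK
  · have hSe : S = ∅ := Finset.card_eq_zero.mp (hS.trans hK)
    simp [hT, hSe, hK]
  rcases Nat.eq_zero_or_pos D with hD | hD
  · subst hD
    have h1 := hG S (le_of_eq hS.symm) Finset.univ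
    simp [hS, hM.ne'] at h1
    -- h1 should give ε > 1
    have hTle : (T.card : ℝ) ≤ K := by
      exact_mod_cast le_trans (Nat.cast_le.mpr (Finset.card_le_card (Finset.filter_subset _ _))) (le_of_eq (by exact_mod_cast hS))
    nlinarith [(Nat.cast_pos (α := ℝ)).mpr hK]
  -- main case
  set B : Finset (Fin M) := Finset.univ.filter (fun z => BadRight K G S z) with hB
  set e : ℕ := ∑ a ∈ S, (Finset.univ.filter (fun j => G a j ∈ B)).card with he
  have hTd : T.card * D ≤ e := by
    calc T.card * D = ∑ a ∈ T, D := by rw [Finset.sum_const, smul_eq_mul]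
    _ = ∑ a ∈ T, (Finset.univ.filter (fun j => G a j ∈ B)).card := by
        apply Finset.sum_congr rfl
        intro a ha
        have hall : ∀ j : Fin D, BadRight K G S (G a j) := (Finset.mem_filter.mp ha).2
        have : (Finset.univ.filter (fun j => G a j ∈ B)) = Finset.univ := by
          apply Finset.eq_univ_of_forall
          intro j
          simp [hB, hall j]
        rw [this, Finset.card_univ, Fintype.card_fin]
    _ ≤ e := Finset.sum_le_sum_of_subset (Finset.filter_subset _ _)
  have hdc : e = ∑ z ∈ B, ∑ b ∈ S, (Finset.univ.filter (fun j => G b j = z)).card := by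
    rw [he, Finset.sum_comm]
    apply Finset.sum_congr rfl
    intro a _
    rw [Finset.card_eq_sum_card_fiberwise (f := G a) (s := Finset.univ.filter (fun j => G a j ∈ B)) (t := B)
      (fun j hj => (Finset.mem_filter.mp hj).2)]
    apply Finset.sum_congr rfl
    intro z hz
    rw [Finset.filter_filter]
    congr 1
    apply Finset.filter_congr
    intro j _
    constructor
    · exact fun h => h.2
    · exact fun h => ⟨h ▸ hz, h⟩
  have hm : (0:ℝ) < M := Nat.cast_pos.mpr hM
  have hk : (0:ℝ) < K := Nat.cast_pos.mpr hK
  have hd : (0:ℝ) < D := Nat.cast_pos.mpr hD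
  have hC : (B.card : ℝ) * ((2*D*K)/M) ≤ (e : ℝ) := by
    have : (e:ℝ) = ∑ z ∈ B, ((∑ b ∈ S, (Finset.univ.filter (fun j => G b j = z)).card : ℕ) : ℝ) := by
      rw [hdc]; push_cast; ring
    rw [this]
    have := Finset.card_nsmul_le_sum B
      (fun z => ((∑ b ∈ S, (Finset.univ.filter (fun j => G b j = z)).card : ℕ) : ℝ))
      ((2*D*K)/M) (fun z hz => le_of_lt ((Finset.mem_filter.mp hz).2))
    simpa [nsmul_eq_mul] using this
  have h1 := hG S (le_of_eq hS.symm) B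
  rw [hS] at h1
  have h1' : (e:ℝ) / (K*D) - (B.card:ℝ)/M < ε := lt_of_le_of_lt (le_abs_self _) (by rw [← he] at h1; exact h1)
  -- clear denominators
  have hA : (e:ℝ) * M - (B.card:ℝ) * (K*D) < ε * (K*D*M) := by
    have := (div_sub_div _ _ (by positivity : ((K:ℝ)*D) ≠ 0) (by positivity : (M:ℝ) ≠ 0)) ▸ h1'
    rw [div_lt_iff₀ (by positivity)] at this
    nlinarith
  have hCc : (B.card:ℝ) * (2*D*K) ≤ (e:ℝ) * M := by
    have h2 := mul_le_mul_of_nonneg_right hC hm.le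
    rw [mul_assoc, div_mul_cancel₀ _ hm.ne'] at h2
    linarith
  have he2 : (e:ℝ) < 2 * ε * K * D := by nlinarith
  have hTe : (T.card : ℝ) * D ≤ (e:ℝ) := by exact_mod_cast Nat.cast_le.mpr hTd |>.trans_eq (by push_cast; ring)
  nlinarith
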